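/- Intermediate formula from the proof of Lemma 2.2 (half dual edge). Let p_i, p_j, p_k be unit vectors in ℝ³ with det(p_i,p_j,p_k) > 0, set λ_ij := arccos⟨p_i,p_j⟩, let n ∈ ℝ³ be the unique vector with ⟨n,p_i⟩ = ⟨n,p_j⟩ = ⟨n,p_k⟩ = 1, and let n_{ij} := (p_i + p_j)/(1 + ⟨p_i,p_j⟩) (the unique vector in the span of p_i and p_j whose inner product with each of p_i, p_j equals 1). Then n − n_{ij} = [ tan( (α(p_i;p_j,p_k) + α(p_j;p_k,p_i) − α(p_k;p_i,p_j))/2 ) / ( 2·cos²(λ_ij/2) ) ]·(p_i × p_j). -/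

import Mathlib

/-!
Write `a = ⟨p_j, p_k⟩`, `b = ⟨p_k, p_i⟩`, `c = ⟨p_i, p_j⟩` and `D = det(p_i, p_j, p_k)`, so that
`D² = 1 - a² - b² - c² + 2abc` (Gram determinant). Expanding `n` in the basis dual to
`p_i, p_j, p_k` gives `D n = p_j × p_k + p_k × p_i + p_i × p_j`, hence
`D ⟨p_i × p_j, n⟩ = (1 - c)(1 + c - a - b)`; since `n - n_{ij}` is orthogonal to `p_i` and `p_j`,
it is `(1 + c - a - b) / (D (1 + c)) • p_i × p_j`.

By the spherical law of cosines the angle at `p_i` has cosine `(a - bc) / (√(1 - b²) √(1 - c²))`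
and sine `D / (√(1 - b²) √(1 - c²))`, and cyclically. Adding the angles, `sin` and `1 + cos`
of `α + β - γ` are `D (1 + c - a - b)` and `D²` times the same positive factor, so
`tan ((α + β - γ) / 2) = (1 + c - a - b) / D`; and `2 cos² (λ_ij / 2) = 1 + c`.
-/
noncomputable section

/-- Standard inner product on `ℝ³`. -/
def dot3 (x y : Fin 3 → ℝ) : ℝ := x 0 * y 0 + x 1 * y 1 + x 2 * y 2

/-- Euclidean norm on `ℝ³`. -/
def norm3 (x : Fin 3 → ℝ) : ℝ := Real.sqrt (dot3 x x)

/-- Cross product on `ℝ³`. -/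
def cross3 (x y : Fin 3 → ℝ) : Fin 3 → ℝ :=
  ![x 1 * y 2 - x 2 * y 1, x 2 * y 0 - x 0 * y 2, x 0 * y 1 - x 1 * y 0]

/-- Determinant of three vectors in `ℝ³`. -/
def det3 (x y z : Fin 3 → ℝ) : ℝ := dot3 (cross3 x y) z

/-- Spherical angle at `a` between `b` and `c` (all unit vectors). -/
def sphAngle (a b c : Fin 3 → ℝ) : ℝ :=
  Real.arccos (dot3 (b - dot3 a b • a) (c - dot3 a c • a) /
    (norm3 (b - dot3 a b • a) * norm3 (c - dot3 a c • a)))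

open Matrix Real

section CrossProduct

variable {R : Type*} [CommRing R]

theorem triple_product_smul_eq (u v w x : Fin 3 → R) :
    (u ⬝ᵥ v ⨯₃ w) • x = (u ⬝ᵥ x) • v ⨯₃ w + (v ⬝ᵥ x) • w ⨯₃ u + (w ⬝ᵥ x) • u ⨯₃ v := by
  ext i
  fin_cases i <;> simp [cross_apply, vec3_dotProduct, vecHead, vecTail] <;> ring

theorem triple_product_sq (u v w : Fin 3 → R) :
    (u ⬝ᵥ v ⨯₃ w) ^ 2 = (u ⬝ᵥ u) * (v ⬝ᵥ v) * (w ⬝ᵥ w) + 2 * (u ⬝ᵥ v) * (v ⬝ᵥ w) * (w ⬝ᵥ u)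
      - (u ⬝ᵥ u) * (v ⬝ᵥ w) ^ 2 - (v ⬝ᵥ v) * (w ⬝ᵥ u) ^ 2 - (w ⬝ᵥ w) * (u ⬝ᵥ v) ^ 2 := by
  simp [cross_apply, vec3_dotProduct, vecHead, vecTail]
  ring

theorem cross_dot_cross_self_of_dotProduct_self_eq_one {u v : Fin 3 → R} (hu : u ⬝ᵥ u = 1)
    (hv : v ⬝ᵥ v = 1) : u ⨯₃ v ⬝ᵥ u ⨯₃ v = 1 - (u ⬝ᵥ v) ^ 2 := by
  rw [cross_dot_cross, hu, hv, dotProduct_comm v u]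
  ring

theorem triple_product_mul_dotProduct_cross {u v w x : Fin 3 → R} (hu : u ⬝ᵥ u = 1)
    (hv : v ⬝ᵥ v = 1) (hxu : u ⬝ᵥ x = 1) (hxv : v ⬝ᵥ x = 1) (hxw : w ⬝ᵥ x = 1) :
    (u ⬝ᵥ v ⨯₃ w) * (u ⨯₃ v ⬝ᵥ x) = (1 - u ⬝ᵥ v) * (1 + u ⬝ᵥ v - v ⬝ᵥ w - w ⬝ᵥ u) := by
  calc (u ⬝ᵥ v ⨯₃ w) * (u ⨯₃ v ⬝ᵥ x) = u ⨯₃ v ⬝ᵥ (u ⬝ᵥ v ⨯₃ w) • x := by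
        rw [dotProduct_smul, smul_eq_mul, mul_comm]
    _ = _ := by
      simp only [triple_product_smul_eq, hxu, hxv, hxw, one_smul, dotProduct_add,
        cross_dot_cross, hu, hv, dotProduct_comm v u, dotProduct_comm u w]
      ring

end CrossProduct

theorem eq_of_dotProduct_eq {K : Type*} [Field K] {u v w x y : Fin 3 → K}
    (huvw : u ⬝ᵥ v ⨯₃ w ≠ 0) (hu : u ⬝ᵥ x = u ⬝ᵥ y) (hv : v ⬝ᵥ x = v ⬝ᵥ y)
    (hw : w ⬝ᵥ x = w ⬝ᵥ y) : x = y := by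
  apply smul_right_injective _ huvw
  simp only [triple_product_smul_eq, hu, hv, hw]

theorem sub_inv_smul_add_eq_smul_cross {K : Type*} [Field K] {u v w x : Fin 3 → K}
    (hu : u ⬝ᵥ u = 1) (hv : v ⬝ᵥ v = 1) (hxu : u ⬝ᵥ x = 1) (hxv : v ⬝ᵥ x = 1)
    (hxw : w ⬝ᵥ x = 1) (huvw : u ⬝ᵥ v ⨯₃ w ≠ 0) (huv : 1 - (u ⬝ᵥ v) ^ 2 ≠ 0) :
    x - (1 + u ⬝ᵥ v)⁻¹ • (u + v)
      = ((1 + u ⬝ᵥ v - v ⬝ᵥ w - w ⬝ᵥ u) / (u ⬝ᵥ v ⨯₃ w) / (1 + u ⬝ᵥ v)) • u ⨯₃ v := by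
  have hx := triple_product_mul_dotProduct_cross hu hv hxu hxv hxw
  have h1 : 1 + u ⬝ᵥ v ≠ 0 := fun h => huv (by linear_combination (1 - u ⬝ᵥ v) * h)
  have hcross : u ⬝ᵥ v ⨯₃ (u ⨯₃ v) = 1 - (u ⬝ᵥ v) ^ 2 := by
    rw [triple_product_permutation, triple_product_permutation,
      cross_dot_cross_self_of_dotProduct_self_eq_one hu hv]
  rw [sub_eq_iff_eq_add']
  refine eq_of_dotProduct_eq (hcross.trans_ne huv) ?_ ?_ ?_ <;>
    simp only [dotProduct_add, dotProduct_smul, smul_eq_mul, dot_self_cross, dot_cross_self,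
      cross_dot_cross_self_of_dotProduct_self_eq_one hu hv, hu, hv, hxu, hxv,
      dotProduct_comm v u, dotProduct_comm (u ⨯₃ v) u, dotProduct_comm (u ⨯₃ v) v]
  · field_simp; ring
  · field_simp; ring
  · field_simp
    linear_combination (1 + u ⬝ᵥ v) * hx

theorem one_sub_sq_dotProduct_pos {R : Type*} [CommRing R] [LinearOrder R]
    [IsStrictOrderedRing R] {u v w : Fin 3 → R} (hu : u ⬝ᵥ u = 1) (hv : v ⬝ᵥ v = 1)
    (huvw : u ⬝ᵥ v ⨯₃ w ≠ 0) : 0 < 1 - (u ⬝ᵥ v) ^ 2 := by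
  rw [← cross_dot_cross_self_of_dotProduct_self_eq_one hu hv]
  refine lt_of_le_of_ne (Finset.sum_nonneg fun i _ => mul_self_nonneg _) (Ne.symm fun h0 => ?_)
  apply huvw
  rw [triple_product_permutation, triple_product_permutation, dotProduct_comm,
    dotProduct_self_eq_zero.mp h0, zero_dotProduct]

theorem tan_half_eq_sin_div_one_add_cos {x : ℝ} (h : 1 + cos x ≠ 0) :
    tan (x / 2) = sin x / (1 + cos x) := by
  obtain ⟨y, rfl⟩ : ∃ y, x = 2 * y := ⟨x / 2, by ring⟩
  rw [mul_div_cancel_left₀ y two_ne_zero, tan_eq_sin_div_cos, sin_two_mul]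
  rw [cos_two_mul] at h ⊢
  have hy : cos y ≠ 0 := fun h0 => h (by rw [h0]; ring)
  field_simp
  ring

/-- The angle, between the sides of cosines `b` and `c`, of a spherical triangle whose third side
has cosine `a` (spherical law of cosines). -/
def triangleAngle (a b c : ℝ) : ℝ := arccos ((a - b * c) / (√(1 - b ^ 2) * √(1 - c ^ 2)))

section TriangleAngle

variable {a b c D : ℝ}

theorem sq_sqrt_one_sub_sq_mul (hb : b ^ 2 < 1) (hc : c ^ 2 < 1) :
    (√(1 - b ^ 2) * √(1 - c ^ 2)) ^ 2 = (1 - b ^ 2) * (1 - c ^ 2) := by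
  rw [mul_pow, sq_sqrt (by linarith), sq_sqrt (by linarith)]

theorem cos_triangleAngle (hb : b ^ 2 < 1) (hc : c ^ 2 < 1)
    (hgram : D ^ 2 = 1 - a ^ 2 - b ^ 2 - c ^ 2 + 2 * a * b * c) :
    cos (triangleAngle a b c) = (a - b * c) / (√(1 - b ^ 2) * √(1 - c ^ 2)) := by
  have hs : 0 < √(1 - b ^ 2) * √(1 - c ^ 2) := by
    have := sqrt_pos.2 (sub_pos.2 hb); have := sqrt_pos.2 (sub_pos.2 hc); positivity
  have hle : ((a - b * c) / (√(1 - b ^ 2) * √(1 - c ^ 2))) ^ 2 ≤ 1 := by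
    rw [div_pow, div_le_one (by positivity), sq_sqrt_one_sub_sq_mul hb hc]
    nlinarith [sq_nonneg D]
  obtain ⟨h₁, h₂⟩ := abs_le.mp ((sq_le_one_iff_abs_le_one _).mp hle)
  exact cos_arccos h₁ h₂

theorem sin_triangleAngle (hb : b ^ 2 < 1) (hc : c ^ 2 < 1) (hD : 0 ≤ D)
    (hgram : D ^ 2 = 1 - a ^ 2 - b ^ 2 - c ^ 2 + 2 * a * b * c) :
    sin (triangleAngle a b c) = D / (√(1 - b ^ 2) * √(1 - c ^ 2)) := by
  have hs : 0 < √(1 - b ^ 2) * √(1 - c ^ 2) := by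
    have := sqrt_pos.2 (sub_pos.2 hb); have := sqrt_pos.2 (sub_pos.2 hc); positivity
  rw [triangleAngle, sin_arccos, ← sqrt_sq (div_nonneg hD hs.le)]
  rw [div_pow, div_pow, one_sub_div (pow_pos hs 2).ne', sq_sqrt_one_sub_sq_mul hb hc, hgram]
  congr 2
  ring

theorem sin_and_one_add_cos_triangleAngle_add_sub (ha : a ^ 2 < 1) (hb : b ^ 2 < 1)
    (hc : c ^ 2 < 1) (hD : 0 ≤ D) (hgram : D ^ 2 = 1 - a ^ 2 - b ^ 2 - c ^ 2 + 2 * a * b * c) :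
    sin (triangleAngle a c b + triangleAngle b a c - triangleAngle c b a)
          * ((1 - a ^ 2) * (1 - b ^ 2) * (1 - c ^ 2))
        = D * (1 + c - a - b) * ((1 - c) * (1 + a) * (1 + b)) ∧
      (1 + cos (triangleAngle a c b + triangleAngle b a c - triangleAngle c b a))
          * ((1 - a ^ 2) * (1 - b ^ 2) * (1 - c ^ 2))
        = D ^ 2 * ((1 - c) * (1 + a) * (1 + b)) := by
  have hgram_acb : D ^ 2 = 1 - a ^ 2 - c ^ 2 - b ^ 2 + 2 * a * c * b := by linear_combination hgram
  have hgram_bac : D ^ 2 = 1 - b ^ 2 - a ^ 2 - c ^ 2 + 2 * b * a * c := by linear_combination hgram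
  have hgram_cba : D ^ 2 = 1 - c ^ 2 - b ^ 2 - a ^ 2 + 2 * c * b * a := by linear_combination hgram
  have := sqrt_pos.2 (sub_pos.2 ha)
  have := sqrt_pos.2 (sub_pos.2 hb)
  have := sqrt_pos.2 (sub_pos.2 hc)
  have hP : √(1 - c ^ 2) * √(1 - b ^ 2) * (√(1 - a ^ 2) * √(1 - c ^ 2))
      * (√(1 - b ^ 2) * √(1 - a ^ 2)) = (1 - a ^ 2) * (1 - b ^ 2) * (1 - c ^ 2) := by
    calc _ = √(1 - a ^ 2) ^ 2 * √(1 - b ^ 2) ^ 2 * √(1 - c ^ 2) ^ 2 := by ring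
      _ = _ := by rw [sq_sqrt (sub_pos.2 ha).le, sq_sqrt (sub_pos.2 hb).le,
        sq_sqrt (sub_pos.2 hc).le]
  simp only [← hP, sin_sub, sin_add, cos_sub, cos_add, cos_triangleAngle hc hb hgram_acb,
    sin_triangleAngle hc hb hD hgram_acb, cos_triangleAngle ha hc hgram_bac,
    sin_triangleAngle ha hc hD hgram_bac, cos_triangleAngle hb ha hgram_cba,
    sin_triangleAngle hb ha hD hgram_cba]
  constructor
  · field_simp
    linear_combination D * hgram
  · field_simp
    rw [sq_sqrt (sub_pos.2 ha).le, sq_sqrt (sub_pos.2 hb).le, sq_sqrt (sub_pos.2 hc).le]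
    linear_combination (a * b * c - 1) * hgram

theorem tan_half_triangleAngle_add_sub (ha : a ^ 2 < 1) (hb : b ^ 2 < 1) (hc : c ^ 2 < 1)
    (hD : 0 < D) (hgram : D ^ 2 = 1 - a ^ 2 - b ^ 2 - c ^ 2 + 2 * a * b * c) :
    tan ((triangleAngle a c b + triangleAngle b a c - triangleAngle c b a) / 2)
      = (1 + c - a - b) / D := by
  obtain ⟨hsin, hcos⟩ := sin_and_one_add_cos_triangleAngle_add_sub ha hb hc hD.le hgram
  obtain ⟨ha₁, -⟩ := abs_lt.mp ((sq_lt_one_iff_abs_lt_one a).mp ha)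
  obtain ⟨hb₁, -⟩ := abs_lt.mp ((sq_lt_one_iff_abs_lt_one b).mp hb)
  obtain ⟨-, hc₂⟩ := abs_lt.mp ((sq_lt_one_iff_abs_lt_one c).mp hc)
  have hW : 0 < (1 - c) * (1 + a) * (1 + b) := by
    have : 0 < 1 - c := by linarith
    have : 0 < 1 + a := by linarith
    have : 0 < 1 + b := by linarith
    positivity
  have hP : 0 < (1 - a ^ 2) * (1 - b ^ 2) * (1 - c ^ 2) := by
    have := sub_pos.2 ha; have := sub_pos.2 hb; have := sub_pos.2 hc; positivity
  have hcos_pos : 0 < 1 + cos (triangleAngle a c b + triangleAngle b a c - triangleAngle c b a) :=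
    pos_of_mul_pos_left (hcos ▸ mul_pos (pow_pos hD 2) hW) hP.le
  rw [tan_half_eq_sin_div_one_add_cos hcos_pos.ne', div_eq_div_iff hcos_pos.ne' hD.ne']
  refine mul_right_cancel₀ hP.ne' ?_
  linear_combination D * hsin - (1 + c - a - b) * hcos

end TriangleAngle

theorem two_mul_cos_sq_half_arccos {c : ℝ} (h₁ : -1 ≤ c) (h₂ : c ≤ 1) :
    2 * cos (arccos c / 2) ^ 2 = 1 + c := by
  rw [cos_sq, mul_div_cancel₀ _ two_ne_zero, cos_arccos h₁ h₂]
  ring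

theorem dot3_eq_dotProduct (x y : Fin 3 → ℝ) : dot3 x y = x ⬝ᵥ y :=
  (vec3_dotProduct x y).symm

theorem cross3_eq_crossProduct (x y : Fin 3 → ℝ) : cross3 x y = x ⨯₃ y := rfl

theorem det3_eq_dotProduct_cross (x y z : Fin 3 → ℝ) : det3 x y z = x ⬝ᵥ y ⨯₃ z := by
  rw [det3, dot3_eq_dotProduct, cross3_eq_crossProduct, dotProduct_comm,
    triple_product_permutation]

theorem dotProduct_self_eq_one_of_norm3 {x : Fin 3 → ℝ} (h : norm3 x = 1) : x ⬝ᵥ x = 1 := by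
  rwa [norm3, sqrt_eq_one, dot3_eq_dotProduct] at h

theorem sphAngle_eq_triangleAngle {x y z : Fin 3 → ℝ} (hx : x ⬝ᵥ x = 1) (hy : y ⬝ᵥ y = 1)
    (hz : z ⬝ᵥ z = 1) : sphAngle x y z = triangleAngle (y ⬝ᵥ z) (x ⬝ᵥ y) (x ⬝ᵥ z) := by
  simp only [sphAngle, triangleAngle, norm3, dot3_eq_dotProduct, sub_dotProduct, dotProduct_sub,
    smul_dotProduct, dotProduct_smul, smul_eq_mul, hx, hy, hz, dotProduct_comm y x,
    dotProduct_comm z x]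
  ring_nf

/-- Intermediate formula from the proof of Lemma 2.2 (half dual edge): the vector from
`n_{ij}` (foot on the line `p_i^* ∩ p_j^*`) to the dual vertex `n` of the triangle
`p_i p_j p_k` is an explicit multiple of `p_i × p_j`. -/
theorem sph_half_dual_edge_formula
    (pi pj pk : Fin 3 → ℝ)
    (hpi : norm3 pi = 1) (hpj : norm3 pj = 1) (hpk : norm3 pk = 1)
    (hdet : 0 < det3 pi pj pk)
    (n : Fin 3 → ℝ)
    (hni : dot3 n pi = 1) (hnj : dot3 n pj = 1) (hnk : dot3 n pk = 1) :
    n - (1 + dot3 pi pj)⁻¹ • (pi + pj)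
      = (Real.tan ((sphAngle pi pj pk + sphAngle pj pk pi - sphAngle pk pi pj) / 2)
          / (2 * Real.cos (Real.arccos (dot3 pi pj) / 2) ^ 2)) • cross3 pi pj := by
  have ui := dotProduct_self_eq_one_of_norm3 hpi
  have uj := dotProduct_self_eq_one_of_norm3 hpj
  have uk := dotProduct_self_eq_one_of_norm3 hpk
  rw [det3_eq_dotProduct_cross] at hdet
  rw [dot3_eq_dotProduct, dotProduct_comm] at hni hnj hnk
  rw [sphAngle_eq_triangleAngle ui uj uk, sphAngle_eq_triangleAngle uj uk ui,
    sphAngle_eq_triangleAngle uk ui uj, dotProduct_comm pi pk, dotProduct_comm pj pi,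
    dotProduct_comm pk pj, dot3_eq_dotProduct, cross3_eq_crossProduct]
  have hgram : (pi ⬝ᵥ pj ⨯₃ pk) ^ 2 = 1 - (pj ⬝ᵥ pk) ^ 2 - (pk ⬝ᵥ pi) ^ 2 - (pi ⬝ᵥ pj) ^ 2
      + 2 * (pj ⬝ᵥ pk) * (pk ⬝ᵥ pi) * (pi ⬝ᵥ pj) := by
    rw [triple_product_sq, ui, uj, uk]
    ring
  have ha := one_sub_sq_dotProduct_pos uj uk (w := pi)
    (by rw [← triple_product_permutation]; exact hdet.ne')
  have hb := one_sub_sq_dotProduct_pos uk ui (w := pj)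
    (by rw [← triple_product_permutation, ← triple_product_permutation]; exact hdet.ne')
  have hc := one_sub_sq_dotProduct_pos ui uj hdet.ne'
  obtain ⟨hc₁, hc₂⟩ := abs_lt.mp ((sq_lt_one_iff_abs_lt_one (pi ⬝ᵥ pj)).mp (by linarith))
  rw [tan_half_triangleAngle_add_sub (by linarith) (by linarith) (by linarith) hdet hgram,
    two_mul_cos_sq_half_arccos hc₁.le hc₂.le]
  exact sub_inv_smul_add_eq_smul_cross ui uj hni hnj hnk hdet.ne' hc.ne'
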